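/- Let p be an odd prime and H a subgroup of a finite group G of order p. Then the least common multiple, over all subgroups H' ≤ G having H as a Sylow p-subgroup, of |Aut_{H'}(H)|, equals |O_{p'}(Aut_G(H))|, the order of the largest p'-subgroup of Aut_G(H). -/

import Mathlib

open Subgroup

/-- `MulAut M` is isomorphic to `AddAut (Additive M)`. -/
private def mulAutToAddAut (M : Type*) [Group M] : MulAut M ≃* Multiplicative (AddAut (Additive M)) where
  toFun e := MulEquiv.toAdditive e
  invFun e := MulEquiv.toAdditive.symm e
  left_inv _ := rfl
  right_inv _ := rfl
  map_mul' _ _ := rfl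

/-- `p` odd, `H ≤ G` of order `p`. The least common multiple, over subgroups
`H' ≤ G` having `H` as a Sylow `p`-subgroup, of `|Aut_{H'}(H)| = [N_{H'}(H) : C_{H'}(H)]`,
equals `|O_{p'}(Aut_G(H))|`, the order of the largest `p'`-part of
`|Aut_G(H)| = [N_G(H) : C_G(H)]`. -/
theorem stmt16 {G : Type*} [Group G] [Finite G] {p : ℕ} (hp : p.Prime) (hodd : p ≠ 2)
    (H : Subgroup G) (hH : Nat.card ↥H = p) :
    (∀ H' : Subgroup G, H ≤ H' → ¬ p ∣ H.relIndex H' →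
      (Subgroup.centralizer (H : Set G)).relIndex ((Subgroup.normalizer (H : Set G)) ⊓ H')
        ∣ ordCompl[p] ((Subgroup.centralizer (H : Set G)).relIndex (Subgroup.normalizer (H : Set G)))) ∧
    ∀ m : ℕ, (∀ H' : Subgroup G, H ≤ H' → ¬ p ∣ H.relIndex H' →
        (Subgroup.centralizer (H : Set G)).relIndex ((Subgroup.normalizer (H : Set G)) ⊓ H') ∣ m) →
      ordCompl[p] ((Subgroup.centralizer (H : Set G)).relIndex (Subgroup.normalizer (H : Set G))) ∣ m := by
  haveI : Fact p.Prime := ⟨hp⟩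
  -- key: for `K ≤ N(H)`, the relative index of `C(H)` in `K` is the cardinality of the image of
  -- `K` under the conjugation homomorphism `f : N(H) →* MulAut H`.
  have key : ∀ K : Subgroup G, K ≤ (Subgroup.normalizer (H : Set G)) →
      (Subgroup.centralizer (H : Set G)).relIndex K
        = Nat.card ((K.subgroupOf (Subgroup.normalizer (H : Set G))).map H.normalizerMonoidHom) := by
    intro K hK
    rw [← Subgroup.relIndex_subgroupOf hK, ← Subgroup.normalizerMonoidHom_ker,
      Subgroup.relIndex_ker]
  haveI hcyc : IsCyclic ↥H := isCyclic_of_prime_card hH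
  -- `MulAut H` is cyclic and finite
  have hcardAdd : Nat.card (Additive ↥H) = p := hH
  haveI : Fact (Nat.card (Additive ↥H)).Prime := ⟨hcardAdd ▸ hp⟩
  haveI : IsCyclic (MulAut ↥H) := by
    have e1 : ZMod (Nat.card (Additive ↥H)) ≃+ Additive ↥H :=
      zmodAddCyclicAddEquiv inferInstance
    have e3 : (ZMod (Nat.card (Additive ↥H)))ˣ ≃* MulAut ↥H :=
      (IsCyclic.mulAutMulEquiv ↥H).symm
    exact isCyclic_of_surjective e3 e3.surjective
  set Q := (((Subgroup.normalizer (H : Set G)).subgroupOf (Subgroup.normalizer (H : Set G))).map H.normalizerMonoidHom) with hQdef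
  have hrel : (Subgroup.centralizer (H : Set G)).relIndex (Subgroup.normalizer (H : Set G)) = Nat.card Q :=
    key (Subgroup.normalizer (H : Set G)) le_rfl
  have hQdvd : Nat.card Q ∣ p - 1 := by
    have h1 : Nat.card Q ∣ Nat.card (MulAut ↥H) := Subgroup.card_subgroup_dvd_card Q
    have h2 : Nat.card (MulAut ↥H) = p - 1 := by
      rw [IsCyclic.card_mulAut, hH, Nat.totient_prime hp]
    rwa [h2] at h1
  have hp1 : ¬ p ∣ p - 1 := Nat.not_dvd_of_pos_of_lt (by have := hp.two_le; omega)
    (by have := hp.two_le; omega)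
  have hpQ : ¬ p ∣ Nat.card Q := fun h => hp1 (h.trans hQdvd)
  have hpC : ¬ p ∣ (Subgroup.centralizer (H : Set G)).relIndex (Subgroup.normalizer (H : Set G)) := by rwa [hrel]
  have hord : ordCompl[p] ((Subgroup.centralizer (H : Set G)).relIndex (Subgroup.normalizer (H : Set G)))
      = (Subgroup.centralizer (H : Set G)).relIndex (Subgroup.normalizer (H : Set G)) := by
    rw [Nat.factorization_eq_zero_of_not_dvd hpC, pow_zero, Nat.div_one]
  constructor
  · intro H' hle hp'
    rw [hord, key _ inf_le_left, hrel]
    exact Subgroup.card_dvd_of_le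
      (Subgroup.map_mono (Subgroup.comap_mono inf_le_left))
  · intro m hm
    rw [hord]
    -- choose a generator of Q
    obtain ⟨b, hb⟩ := IsCyclic.exists_generator (α := ↥Q)
    obtain ⟨nn, -, hfn⟩ := Subgroup.mem_map.mp b.2
    set a : MulAut ↥H := (b : MulAut ↥H) with hadef
    have hQa : Subgroup.zpowers a = Q := by
      have htop : Subgroup.zpowers b = ⊤ := (Subgroup.zpowers b).eq_top_iff'.mpr hb
      have h1 : (Subgroup.zpowers b).map Q.subtype = Subgroup.zpowers a :=
        MonoidHom.map_zpowers Q.subtype b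
      rw [htop] at h1
      rw [← h1, ← MonoidHom.range_eq_map, Subgroup.range_subtype]
    have hpa : ¬ p ∣ orderOf a := by
      intro hdvd
      exact hpQ (hdvd.trans (by rw [hadef, Subgroup.orderOf_coe]; exact orderOf_dvd_natCard b))
    -- replace nn by its p'-part
    set k := p ^ (orderOf nn).factorization p with hkdef
    have hkdvd : k ∣ orderOf nn := Nat.ordProj_dvd _ _
    set g' : ↥(Subgroup.normalizer (H : Set G)) := nn ^ k with hg'def
    have horderg' : orderOf g' = ordCompl[p] (orderOf nn) := by
      rw [hg'def, orderOf_pow, Nat.gcd_eq_right hkdvd]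
    have hnnpos : orderOf nn ≠ 0 := (orderOf_pos nn).ne'
    have hpg' : ¬ p ∣ orderOf g' := by
      rw [horderg']; exact Nat.not_dvd_ordCompl hp hnnpos
    set g'' : G := (g' : G) with hg''def
    have hordg'' : orderOf g'' = orderOf g' := Subgroup.orderOf_coe g'
    have hg''N : g'' ∈ (Subgroup.normalizer (H : Set G)) := g'.2
    set H' := H ⊔ Subgroup.zpowers g'' with hH'def
    have hH'le : H' ≤ (Subgroup.normalizer (H : Set G)) := sup_le H.le_normalizer (Subgroup.zpowers_le.mpr hg''N)
    have hHle : H ≤ H' := le_sup_left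
    -- H is normal in H'
    haveI hnormal : (H.subgroupOf H').Normal := by
      constructor
      intro x hx g
      rw [Subgroup.mem_subgroupOf] at hx ⊢
      simpa using (Subgroup.mem_normalizer_iff.mp (hH'le g.2) (x : G)).mp hx
    set gx : ↥H' := ⟨g'', Subgroup.mem_sup_right (Subgroup.mem_zpowers g'')⟩ with hgxdef
    have htopH' : (H.subgroupOf H') ⊔ Subgroup.zpowers gx = ⊤ := by
      apply Subgroup.map_injective H'.subtype_injective
      rw [Subgroup.map_sup, MonoidHom.map_zpowers, Subgroup.subgroupOf_map_subtype,
        inf_eq_left.mpr hHle]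
      have h2 : H'.subtype gx = g'' := rfl
      rw [h2, ← MonoidHom.range_eq_map, Subgroup.range_subtype]
    -- the relative index of H in H' divides orderOf g''
    have hrelHH' : H.relIndex H' ∣ orderOf g'' := by
      set π := QuotientGroup.mk' (H.subgroupOf H') with hπdef
      have hbot : (H.subgroupOf H').map π = ⊥ :=
        (Subgroup.map_eq_bot_iff _).mpr (by rw [hπdef, QuotientGroup.ker_mk'])
      have hquot : Subgroup.zpowers (π gx) = ⊤ := by
        have h1 : ((H.subgroupOf H') ⊔ Subgroup.zpowers gx).map π = ⊤ := by
          rw [htopH']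
          exact Subgroup.map_top_of_surjective π (QuotientGroup.mk'_surjective _)
        rwa [Subgroup.map_sup, hbot, bot_sup_eq, MonoidHom.map_zpowers] at h1
      have hcardq : H.relIndex H' = orderOf (π gx) := by
        rw [Subgroup.relIndex, Subgroup.index, ← Nat.card_zpowers, hquot, Subgroup.card_top]
      have h3 : orderOf gx = orderOf g'' :=
        Subgroup.orderOf_mk g'' (Subgroup.mem_sup_right (Subgroup.mem_zpowers g''))
      rw [hcardq, ← h3]
      exact orderOf_map_dvd π gx
    have hnotp : ¬ p ∣ H.relIndex H' := fun h => by
      rw [hordg''] at hrelHH'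
      exact hpg' (h.trans hrelHH')
    -- the image of H' under f is all of Q
    have hfg' : H.normalizerMonoidHom g' = a ^ k := by rw [hg'def, map_pow, hfn]
    have hcop : Nat.Coprime (orderOf a) k := by
      rw [hkdef]
      exact Nat.Coprime.pow_right _ ((hp.coprime_iff_not_dvd.mpr hpa).symm)
    have hzpow : Subgroup.zpowers (a ^ k) = Subgroup.zpowers a := by
      have hle' : Subgroup.zpowers (a ^ k) ≤ Subgroup.zpowers a :=
        Subgroup.zpowers_le.mpr (Subgroup.npow_mem_zpowers a k)
      apply Subgroup.eq_of_le_of_card_ge hle'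
      rw [Nat.card_zpowers, Nat.card_zpowers, orderOf_pow, Nat.Coprime.gcd_eq_one hcop,
        Nat.div_one]
    have himg : (H'.subgroupOf (Subgroup.normalizer (H : Set G))).map H.normalizerMonoidHom = Q := by
      have hge : Q ≤ (H'.subgroupOf (Subgroup.normalizer (H : Set G))).map H.normalizerMonoidHom := by
        rw [← hQa, ← hzpow, ← hfg', Subgroup.zpowers_le]
        exact Subgroup.mem_map.mpr
          ⟨g', Subgroup.mem_subgroupOf.mpr (Subgroup.mem_sup_right (Subgroup.mem_zpowers g'')), rfl⟩
      exact le_antisymm (Subgroup.map_mono (Subgroup.comap_mono hH'le)) hge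
    have hfinal := hm H' hHle hnotp
    rw [inf_eq_right.mpr hH'le] at hfinal
    rw [hrel, ← himg, ← key H' hH'le]
    exact hfinal
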